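/- arXiv:0707.1485 — 2 statements merged into one kernel-verified Lean document; each statement's English description precedes it below -/
import Mathlib

section
/- Let (B_n) be the elliptic divisibility sequence of a non-torsion point Q with canonical height h, and let B_n* denote the primitive part of B_n (the maximal divisor of B_n coprime to all B_m with 0 < m < n). Assuming log B_k ~ h k² and the bound log B_n* ≥ log B_n − ∑_{p | n, p prime} log(p² B_{n/p}), one has log B_n* ≥ 0.547 · h n² for all sufficiently large n. -/
/-!
Since `log B_k ~ h k²`, each term `log (p² B_{n/p})` is at most `(h + ε) n² / p² + O(log p)`, so
the subtracted sum is at most `(h + ε) n² ∑_{p ∣ n} 1/p² + O(log n)`, while `log B_n ≥ (h - ε) n²`.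
Hence `log B_n* ≥ (1 - S - O(ε)) h n² - O(log n)` whenever `∑_{p ∣ n} 1/p² ≤ S` for all `n`, and
`S = 0.4529` works: the primes up to `2310` lie in a wheel whose reciprocal squares sum to less than
`0.45245`, and the larger ones contribute at most `∑_{m > 2310} 1/m² < 1/2310`.
-/

open Filter

/-- `Bstar` is the primitive part of the sequence `B`: `Bstar n` is the maximal divisor of
`B n` coprime to all earlier terms `B m`, `0 < m < n`. -/
def IsPrimitivePart (B Bstar : ℕ → ℕ) : Prop :=
  ∀ n : ℕ, 0 < n → Bstar n ∣ B n ∧ (∀ m : ℕ, 0 < m → m < n → Nat.Coprime (Bstar n) (B m)) ∧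
    ∀ d : ℕ, d ∣ B n → (∀ m : ℕ, 0 < m → m < n → Nat.Coprime d (B m)) → d ∣ Bstar n

open Finset Real

/-- The integers in `[2, 2310]` with no prime factor among `2, 3, 5, 7, 11` other than
themselves: every prime `p ≤ 2310`, plus composites whose smallest factor is at least `13`, which
add less than `3 · 10⁻⁴` to `∑ 1 / m²`. -/
def wheelCandidates : Finset ℕ :=
  (Icc 2 2310).filter fun m => ∀ q ∈ ([2, 3, 5, 7, 11] : List ℕ), q ∣ m → q = m

lemma mem_wheelCandidates {p : ℕ} (hp : p.Prime) (hle : p ≤ 2310) : p ∈ wheelCandidates :=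
  mem_filter.2 ⟨mem_Icc.2 ⟨hp.two_le, hle⟩, fun q hq hqp =>
    (hp.eq_one_or_self_of_dvd q hqp).resolve_left (by rintro rfl; simp at hq)⟩

-- Each `1 / m²` rounded up to a multiple of `10⁻⁸`, so that the sum is a kernel computation in `ℕ`.
set_option maxRecDepth 100000 in
lemma sum_wheelCandidates_div_sq_add_one_le :
    ∑ m ∈ wheelCandidates, (10 ^ 8 / m ^ 2 + 1) ≤ 45244629 := by
  decide

lemma Nat.cast_div_lt_div_add_one {K : Type*} [Semifield K] [LinearOrder K]
    [IsStrictOrderedRing K] [FloorSemiring K] (a b : ℕ) : (a : K) / b < (a / b : ℕ) + 1 := by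
  simpa only [Nat.floor_div_eq_div] using Nat.lt_floor_add_one ((a : K) / b)

lemma sum_one_div_sq_wheelCandidates_le :
    ∑ m ∈ wheelCandidates, 1 / (m : ℝ) ^ 2 ≤ 0.45244629 := by
  have hterm (m : ℕ) : 1 / (m : ℝ) ^ 2 ≤ ((10 ^ 8 / m ^ 2 + 1 : ℕ) : ℝ) / 10 ^ 8 := by
    have := Nat.cast_div_lt_div_add_one (K := ℝ) (10 ^ 8) (m ^ 2)
    rw [le_div_iff₀ (by positivity), one_div_mul_eq_div]
    norm_num at this ⊢
    exact this.le
  have hcert : ((∑ m ∈ wheelCandidates, (10 ^ 8 / m ^ 2 + 1) : ℕ) : ℝ) ≤ 45244629 := by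
    exact_mod_cast sum_wheelCandidates_div_sq_add_one_le
  calc ∑ m ∈ wheelCandidates, 1 / (m : ℝ) ^ 2
      ≤ ∑ m ∈ wheelCandidates, ((10 ^ 8 / m ^ 2 + 1 : ℕ) : ℝ) / 10 ^ 8 :=
        sum_le_sum fun m _ => hterm m
    _ = ((∑ m ∈ wheelCandidates, (10 ^ 8 / m ^ 2 + 1) : ℕ) : ℝ) / 10 ^ 8 := by
      rw [Nat.cast_sum, sum_div]
    _ ≤ 0.45244629 := by rw [div_le_iff₀ (by positivity)]; linarith

lemma sum_Ioc_one_div_sq_le_sub {M K : ℕ} (hM : 0 < M) (hMK : M ≤ K) :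
    ∑ m ∈ Ioc M K, 1 / (m : ℝ) ^ 2 ≤ 1 / (M : ℝ) - 1 / K := by
  induction K, hMK using Nat.le_induction with
  | base => simp
  | succ K hMK ih =>
    have hK : (0 : ℝ) < K := by exact_mod_cast hM.trans_le hMK
    have htelescope : 1 / ((K : ℝ) + 1) ^ 2 ≤ 1 / K - 1 / ((K : ℝ) + 1) := by
      rw [div_sub_div _ _ hK.ne' (by positivity), div_le_div_iff₀ (by positivity) (by positivity)]
      nlinarith
    rw [sum_Ioc_succ_top (by omega)]
    push_cast
    linarith

lemma sum_one_div_sq_le_of_lt {M : ℕ} (hM : 0 < M) {s : Finset ℕ} (hs : ∀ m ∈ s, M < m) :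
    ∑ m ∈ s, 1 / (m : ℝ) ^ 2 ≤ 1 / (M : ℝ) := by
  set K := max M (s.sup id)
  have hsub : s ⊆ Ioc M K := fun m hm =>
    mem_Ioc.2 ⟨hs m hm, le_max_of_le_right (le_sup (f := id) hm)⟩
  calc ∑ m ∈ s, 1 / (m : ℝ) ^ 2 ≤ ∑ m ∈ Ioc M K, 1 / (m : ℝ) ^ 2 :=
        sum_le_sum_of_subset_of_nonneg hsub fun _ _ _ => by positivity
    _ ≤ 1 / (M : ℝ) - 1 / K := sum_Ioc_one_div_sq_le_sub hM (le_max_left _ _)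
    _ ≤ 1 / (M : ℝ) := sub_le_self _ (by positivity)

lemma sum_one_div_sq_le_of_prime {s : Finset ℕ} (hs : ∀ p ∈ s, p.Prime) :
    ∑ p ∈ s, 1 / (p : ℝ) ^ 2 ≤ 0.4529 := by
  rw [← sum_filter_add_sum_filter_not s (· ≤ 2310)]
  have hsmall : ∑ p ∈ s.filter (· ≤ 2310), 1 / (p : ℝ) ^ 2 ≤ 0.45244629 := by
    refine le_trans (sum_le_sum_of_subset_of_nonneg ?_ fun _ _ _ => by positivity)
      sum_one_div_sq_wheelCandidates_le
    intro p hp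
    obtain ⟨hps, hple⟩ := mem_filter.1 hp
    exact mem_wheelCandidates (hs p hps) hple
  have hlarge : ∑ p ∈ s.filter (¬ · ≤ 2310), 1 / (p : ℝ) ^ 2 ≤ 1 / 2310 :=
    (sum_one_div_sq_le_of_lt (M := 2310) (by norm_num) fun p hp =>
      not_le.1 (mem_filter.1 hp).2).trans_eq (by norm_num)
  linarith

lemma exists_le_mul_sq_add {f : ℕ → ℝ} {h c : ℝ}
    (hf : Tendsto (fun k : ℕ => f k / (k : ℝ) ^ 2) atTop (nhds h)) (hc : h < c) :
    ∃ C, 0 ≤ C ∧ ∀ k : ℕ, f k ≤ c * (k : ℝ) ^ 2 + C := by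
  have hev : ∀ᶠ k : ℕ in atTop, f k - c * (k : ℝ) ^ 2 ≤ 0 := by
    filter_upwards [hf.eventually (gt_mem_nhds hc), eventually_gt_atTop 0] with k hk hk0
    rw [div_lt_iff₀ (by positivity)] at hk
    linarith
  obtain ⟨C, hC⟩ := (isBoundedUnder_of_eventually_le hev).bddAbove_range
  refine ⟨max C 0, le_max_right _ _, fun k => ?_⟩
  linarith [hC (Set.mem_range_self k), le_max_left C 0]

lemma eventually_mul_sq_le {f : ℕ → ℝ} {h c : ℝ}
    (hf : Tendsto (fun k : ℕ => f k / (k : ℝ) ^ 2) atTop (nhds h)) (hc : c < h) :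
    ∀ᶠ k : ℕ in atTop, c * (k : ℝ) ^ 2 ≤ f k := by
  filter_upwards [hf.eventually (lt_mem_nhds hc), eventually_gt_atTop 0] with k hk hk0
  exact ((lt_div_iff₀ (by positivity)).1 hk).le

lemma sum_log_primeFactors_le (n : ℕ) : ∑ p ∈ n.primeFactors, log p ≤ log n := by
  calc ∑ p ∈ n.primeFactors, log p = ∑ p ∈ n.primeFactors, ArithmeticFunction.vonMangoldt p :=
        sum_congr rfl fun p hp =>
          (ArithmeticFunction.vonMangoldt_apply_prime (Nat.prime_of_mem_primeFactors hp)).symm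
    _ ≤ ∑ d ∈ n.divisors, ArithmeticFunction.vonMangoldt d :=
        sum_le_sum_of_subset_of_nonneg
          (fun _ hp => Nat.mem_divisors.2 (Nat.mem_primeFactors.1 hp).2)
          fun _ _ _ => ArithmeticFunction.vonMangoldt_nonneg
    _ = log n := ArithmeticFunction.vonMangoldt_sum

lemma log_mul_le_log_add_log {a : ℝ} (ha : 1 ≤ a) (x : ℝ) : log (a * x) ≤ log a + log x := by
  rcases eq_or_ne x 0 with rfl | hx
  · simpa using log_nonneg ha
  · exact (log_mul (by positivity) hx).le

lemma sum_log_sq_mul_le {b : ℕ → ℝ} {c C S : ℝ} (hc : 0 ≤ c) (hC : 0 ≤ C)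
    (hb : ∀ k : ℕ, log (b k) ≤ c * (k : ℝ) ^ 2 + C) {n : ℕ}
    (hS : ∑ p ∈ n.primeFactors, 1 / (p : ℝ) ^ 2 ≤ S) :
    ∑ p ∈ n.primeFactors, log ((p : ℝ) ^ 2 * b (n / p)) ≤
      c * S * (n : ℝ) ^ 2 + (2 + C / log 2) * log n := by
  have hlog2 : 0 < log 2 := log_pos one_lt_two
  have hterm : ∀ p ∈ n.primeFactors, log ((p : ℝ) ^ 2 * b (n / p)) ≤
      (2 + C / log 2) * log p + c * (n : ℝ) ^ 2 * (1 / (p : ℝ) ^ 2) := by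
    intro p hp
    have hp2 : (2 : ℝ) ≤ p := by exact_mod_cast (Nat.prime_of_mem_primeFactors hp).two_le
    have hquot : ((n / p : ℕ) : ℝ) ^ 2 ≤ (n : ℝ) ^ 2 * (1 / (p : ℝ) ^ 2) := by
      calc ((n / p : ℕ) : ℝ) ^ 2 ≤ ((n : ℝ) / p) ^ 2 := by gcongr; exact Nat.cast_div_le
        _ = _ := by ring
    have hconst : C ≤ C / log 2 * log p := by
      rw [div_mul_eq_mul_div, le_div_iff₀ hlog2]
      exact mul_le_mul_of_nonneg_left (log_le_log two_pos hp2) hC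
    calc log ((p : ℝ) ^ 2 * b (n / p)) ≤ log ((p : ℝ) ^ 2) + log (b (n / p)) :=
          log_mul_le_log_add_log (by nlinarith) _
      _ ≤ 2 * log p + (c * ((n / p : ℕ) : ℝ) ^ 2 + C) := by
          rw [log_pow]; push_cast; linarith [hb (n / p)]
      _ ≤ _ := by linarith [mul_le_mul_of_nonneg_left hquot hc]
  calc ∑ p ∈ n.primeFactors, log ((p : ℝ) ^ 2 * b (n / p))
      ≤ ∑ p ∈ n.primeFactors, ((2 + C / log 2) * log p + c * (n : ℝ) ^ 2 * (1 / (p : ℝ) ^ 2)) :=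
        sum_le_sum hterm
    _ = (2 + C / log 2) * ∑ p ∈ n.primeFactors, log p +
          c * (n : ℝ) ^ 2 * ∑ p ∈ n.primeFactors, 1 / (p : ℝ) ^ 2 := by
        rw [sum_add_distrib, mul_sum, mul_sum]
    _ ≤ (2 + C / log 2) * log n + c * (n : ℝ) ^ 2 * S := by
        gcongr
        exact sum_log_primeFactors_le n
    _ = _ := by ring

theorem eventually_mul_sq_le_of_ge_sub_sum_log {b f : ℕ → ℝ} {h S a : ℝ} (hpos : 0 < h)
    (hS : ∀ n : ℕ, ∑ p ∈ n.primeFactors, 1 / (p : ℝ) ^ 2 ≤ S) (ha : a < 1 - S)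
    (hgrowth : Tendsto (fun k : ℕ => log (b k) / (k : ℝ) ^ 2) atTop (nhds h))
    (hf : ∀ n : ℕ, 0 < n →
      f n ≥ log (b n) - ∑ p ∈ n.primeFactors, log ((p : ℝ) ^ 2 * b (n / p))) :
    ∀ᶠ n : ℕ in atTop, a * h * (n : ℝ) ^ 2 ≤ f n := by
  have hS0 : 0 ≤ S := by simpa using hS 1
  obtain ⟨c', c, hc', hc, hgap⟩ : ∃ c' c, c' < h ∧ h < c ∧ a * h < c' - c * S := by
    set δ := (1 - S - a) * h / (2 * (1 + S)) with hδ_def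
    have hδ : 0 < δ := by apply div_pos <;> nlinarith
    have hδS : δ * (1 + S) = (1 - S - a) * h / 2 := by rw [hδ_def]; field_simp
    exact ⟨h - δ, h + δ, by linarith, by linarith, by nlinarith⟩
  set η := c' - c * S - a * h
  obtain ⟨C, hC0, hC⟩ := exists_le_mul_sq_add hgrowth hc
  set K := 2 + C / log 2
  have hK : 0 ≤ K := by have := log_pos one_lt_two; positivity
  filter_upwards [eventually_mul_sq_le hgrowth hc', eventually_gt_atTop 0,
    tendsto_natCast_atTop_atTop.eventually_ge_atTop (K / η)] with n hlower hn hKn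
  have hsum := sum_log_sq_mul_le (hpos.trans hc).le hC0 hC (hS n)
  have herror : K * log n ≤ η * (n : ℝ) ^ 2 := by
    have hη : 0 < η := by linarith
    calc K * log n ≤ K * n := mul_le_mul_of_nonneg_left (log_le_self n.cast_nonneg) hK
      _ ≤ (η * n) * n := by gcongr; rwa [div_le_iff₀' hη] at hKn
      _ = η * (n : ℝ) ^ 2 := by ring
  linarith [hf n hn]

theorem primitive_part_growth_general (h : ℝ) (hpos : 0 < h) (B Bstar : ℕ → ℕ)
    (hgrowth : Tendsto (fun k : ℕ => Real.log (B k) / (k : ℝ) ^ 2) atTop (nhds h))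
    (hlb : ∀ n : ℕ, 0 < n → Real.log (Bstar n) ≥
      Real.log (B n) - ∑ p ∈ n.primeFactors, Real.log ((p : ℝ) ^ 2 * (B (n / p) : ℝ))) :
    ∃ N : ℕ, ∀ n ≥ N, Real.log (Bstar n) ≥ 0.547 * h * (n : ℝ) ^ 2 :=
  eventually_atTop.1 <| eventually_mul_sq_le_of_ge_sub_sum_log (b := fun k => (B k : ℝ))
    (f := fun n => Real.log (Bstar n)) hpos
    (fun _ => sum_one_div_sq_le_of_prime fun _ => Nat.prime_of_mem_primeFactors)
    (by norm_num) hgrowth hlb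

/-- Growth of the primitive part: if `log B k ~ h k²` (with `h > 0` the canonical height)
and `log Bₙ* ≥ log Bₙ − ∑_{p ∣ n prime} log (p² B_{n/p})`, then for all sufficiently large
`n` one has `log Bₙ* ≥ 0.547 · h · n²`. -/
theorem primitive_part_growth (h : ℝ) (hpos : 0 < h) (B Bstar : ℕ → ℕ)
    (hB : ∀ n, 0 < n → 0 < B n)
    (hprim : IsPrimitivePart B Bstar)
    (hgrowth : Tendsto (fun k : ℕ => Real.log (B k) / (k : ℝ) ^ 2) atTop (nhds h))
    (hlb : ∀ n : ℕ, 0 < n → Real.log (Bstar n) ≥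
      Real.log (B n) - ∑ p ∈ n.primeFactors, Real.log ((p : ℝ) ^ 2 * (B (n / p) : ℝ))) :
    ∃ N : ℕ, ∀ n ≥ N, Real.log (Bstar n) ≥ 0.547 * h * (n : ℝ) ^ 2 :=
  primitive_part_growth_general h hpos B Bstar hgrowth hlb
end

section
/- The point Q = (2, 2) on the elliptic curve E : y² = x³ − 4 over ℚ is a point of infinite order. -/
open WeierstrassCurve

/-! On the Mordell curve `y² = x³ + b` with `b ∈ ℤ`, the duplication formula
`x(2P) = x (x³ - 8b) / (4 (x³ + b))` lowers the 2-adic valuation of a non-2-integral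
`x`-coordinate by exactly 2. Since `x(4Q) = 785/484` is not 2-integral, the points `2ᵐ • 4Q` have
pairwise distinct `x`-coordinates, so `4Q`, and hence `Q`, has infinite order. -/

/-- The `x`-coordinate `λ² - 2x` of `2 • (x, y)` on `y² = x³ + b`, with tangent slope
`λ = 3x² / 2y` and `y²` eliminated. -/
def mordellDoubleX {F : Type*} [Field F] (b x : F) : F :=
  x * (x ^ 3 - 8 * b) / (4 * (x ^ 3 + b))

namespace WeierstrassCurve.Affine

lemma exists_two_nsmul_some_mordellDoubleX {F : Type*} [Field F] [DecidableEq F]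
    {W : WeierstrassCurve F} (h2 : (2 : F) ≠ 0) (h₁ : W.a₁ = 0) (h₂ : W.a₂ = 0) (h₃ : W.a₃ = 0)
    (h₄ : W.a₄ = 0) {x y : F} (h : W.toAffine.Nonsingular x y) (hx : x ^ 3 + W.a₆ ≠ 0) :
    ∃ (x' y' : F) (h' : W.toAffine.Nonsingular x' y'),
      2 • Point.some x y h = Point.some x' y' h' ∧ x' = mordellDoubleX W.a₆ x := by
  have hxy : y ^ 2 = x ^ 3 + W.a₆ := by
    have := (W.toAffine.equation_iff x y).mp h.1
    rw [h₁, h₂, h₃, h₄] at this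
    linear_combination this
  have hy : y ≠ 0 := by rintro rfl; exact hx (by simpa using hxy.symm)
  have hnegY : W.toAffine.negY x y = -y := by simp [negY, h₁, h₃]
  have hy' : y ≠ W.toAffine.negY x y := by
    rw [hnegY]; intro hc; exact mul_ne_zero h2 hy (by linear_combination hc)
  refine ⟨_, _, nonsingular_add h h fun hc ↦ hy' hc.2, by rw [two_nsmul, Point.add_of_Y_ne hy'], ?_⟩
  have hslope : W.toAffine.slope x x y y = 3 * x ^ 2 / (2 * y) := by
    rw [slope_of_Y_ne rfl hy', hnegY, h₁, h₂, h₄]; ring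
  have h4 : (4 : F) ≠ 0 := by
    have := mul_ne_zero h2 h2; norm_num at this; exact this
  rw [addX, hslope, h₁, h₂, mordellDoubleX, ← hxy]
  field_simp
  linear_combination (-32 * x) * hxy

end WeierstrassCurve.Affine

namespace padicValRat

variable {p : ℕ} [Fact p.Prime]

lemma add_eq_of_lt_of_ne_zero {q r : ℚ} (hq : q ≠ 0) (hlt : padicValRat p q < padicValRat p r) :
    padicValRat p (q + r) = padicValRat p q := by
  rcases eq_or_ne r 0 with rfl | hr
  · rw [add_zero]
  refine add_eq_of_lt (fun hqr ↦ hlt.ne ?_) hq hr hlt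
  rw [eq_neg_of_add_eq_zero_right hqr, padicValRat.neg]

lemma cube_add_intCast {x : ℚ} (hx : padicValRat p x < 0) (b : ℤ) :
    padicValRat p (x ^ 3 + b) = 3 * padicValRat p x := by
  have hx0 : x ≠ 0 := by rintro rfl; simp at hx
  have hcube : padicValRat p (x ^ 3) = 3 * padicValRat p x := by
    rw [padicValRat.pow x]; push_cast; rfl
  have hb : 0 ≤ padicValRat p b := by rw [of_int]; positivity
  rw [add_eq_of_lt_of_ne_zero (pow_ne_zero 3 hx0) (by omega), hcube]

end padicValRat

lemma padicValRat_two_mordellDoubleX {x : ℚ} (hx : padicValRat 2 x < 0) (b : ℤ) :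
    padicValRat 2 (mordellDoubleX (b : ℚ) x) = padicValRat 2 x - 2 := by
  have hx0 : x ≠ 0 := by rintro rfl; simp at hx
  have hsub : padicValRat 2 (x ^ 3 - 8 * b) = 3 * padicValRat 2 x := by
    rw [show x ^ 3 - 8 * b = x ^ 3 + ((-8 * b : ℤ) : ℚ) by push_cast; ring]
    exact padicValRat.cube_add_intCast hx _
  have hadd := padicValRat.cube_add_intCast hx b
  have ne_zero_of_val {q : ℚ} (hq : padicValRat 2 q = 3 * padicValRat 2 x) : q ≠ 0 := by
    rintro rfl; simp at hq; omega
  have h4 : padicValRat 2 4 = 2 := by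
    rw [show (4 : ℚ) = (2 ^ 2 : ℕ) by norm_num, padicValRat.of_nat, padicValNat.prime_pow]
    rfl
  rw [mordellDoubleX, padicValRat.div (mul_ne_zero hx0 (ne_zero_of_val hsub))
      (mul_ne_zero four_ne_zero (ne_zero_of_val hadd)),
    padicValRat.mul hx0 (ne_zero_of_val hsub), padicValRat.mul four_ne_zero (ne_zero_of_val hadd),
    hsub, hadd, h4]
  ring

namespace WeierstrassCurve.Affine

variable {W : WeierstrassCurve ℚ}

lemma exists_two_nsmul_some_padicValRat (h₁ : W.a₁ = 0) (h₂ : W.a₂ = 0) (h₃ : W.a₃ = 0)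
    (h₄ : W.a₄ = 0) {b : ℤ} (h₆ : W.a₆ = b) {x y : ℚ} (h : W.toAffine.Nonsingular x y)
    (hx : padicValRat 2 x < 0) :
    ∃ (x' y' : ℚ) (h' : W.toAffine.Nonsingular x' y'),
      2 • Point.some x y h = Point.some x' y' h' ∧ padicValRat 2 x' = padicValRat 2 x - 2 := by
  have hne : x ^ 3 + W.a₆ ≠ 0 := fun h0 ↦ by
    have := padicValRat.cube_add_intCast hx b
    rw [← h₆, h0, padicValRat.zero] at this
    omega
  obtain ⟨x', y', h', hP, rfl⟩ :=
    exists_two_nsmul_some_mordellDoubleX two_ne_zero h₁ h₂ h₃ h₄ h hne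
  exact ⟨_, y', h', hP, h₆ ▸ padicValRat_two_mordellDoubleX hx b⟩

lemma exists_two_pow_nsmul_some_padicValRat (h₁ : W.a₁ = 0) (h₂ : W.a₂ = 0) (h₃ : W.a₃ = 0)
    (h₄ : W.a₄ = 0) {b : ℤ} (h₆ : W.a₆ = b) {x y : ℚ} (h : W.toAffine.Nonsingular x y)
    (hx : padicValRat 2 x < 0) (m : ℕ) :
    ∃ (x' y' : ℚ) (h' : W.toAffine.Nonsingular x' y'),
      2 ^ m • Point.some x y h = Point.some x' y' h' ∧
        padicValRat 2 x' = padicValRat 2 x - 2 * m := by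
  induction m with
  | zero => exact ⟨x, y, h, one_nsmul _, by simp⟩
  | succ m ih =>
    obtain ⟨x', y', h', hP, hv⟩ := ih
    obtain ⟨x'', y'', h'', hP', hv'⟩ :=
      exists_two_nsmul_some_padicValRat h₁ h₂ h₃ h₄ h₆ h' (by omega)
    refine ⟨x'', y'', h'', by rw [pow_succ, mul_nsmul, hP, hP'], ?_⟩
    rw [hv', hv]
    push_cast
    ring

theorem not_isOfFinAddOrder_some_of_padicValRat_neg (h₁ : W.a₁ = 0) (h₂ : W.a₂ = 0)
    (h₃ : W.a₃ = 0) (h₄ : W.a₄ = 0) {b : ℤ} (h₆ : W.a₆ = b) {x y : ℚ}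
    (h : W.toAffine.Nonsingular x y) (hx : padicValRat 2 x < 0) :
    ¬IsOfFinAddOrder (Point.some x y h) := by
  intro hfin
  refine Set.infinite_of_injective_forall_mem (f := fun m : ℕ ↦ 2 ^ m • Point.some x y h)
    (fun m m' hm ↦ ?_) (fun m ↦ (AddSubmonoid.mem_multiples_iff _ _).mpr ⟨2 ^ m, rfl⟩)
    hfin.finite_multiples
  obtain ⟨x₁, y₁, h₁', hP₁, hv₁⟩ := exists_two_pow_nsmul_some_padicValRat h₁ h₂ h₃ h₄ h₆ h hx m
  obtain ⟨x₂, y₂, h₂', hP₂, hv₂⟩ := exists_two_pow_nsmul_some_padicValRat h₁ h₂ h₃ h₄ h₆ h hx m'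
  simp only [hP₁, hP₂, Point.some.injEq] at hm
  rw [hm.1, hv₂] at hv₁
  omega

end WeierstrassCurve.Affine

theorem point_on_xcubed_sub_four_infinite_order_general (W : WeierstrassCurve ℚ)
    (h₁ : W.a₁ = 0) (h₂ : W.a₂ = 0) (h₃ : W.a₃ = 0) (h₄ : W.a₄ = 0) (h₆ : W.a₆ = -4)
    (h : W.toAffine.Nonsingular 2 2) :
    ∀ n : ℕ, 0 < n → (n : ℤ) • (WeierstrassCurve.Affine.Point.some _ _ h) ≠ 0 := by
  intro n hn hnQ
  -- `2 • Q = (5, -11)` is still 2-integral; `4 • Q = (785/484, _)` is not.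
  obtain ⟨_, y₂, hQ₂, h2Q, rfl⟩ :=
    Affine.exists_two_nsmul_some_mordellDoubleX two_ne_zero h₁ h₂ h₃ h₄ h (by rw [h₆]; norm_num)
  obtain ⟨_, y₄, hQ₄, h4Q, rfl⟩ :=
    Affine.exists_two_nsmul_some_mordellDoubleX two_ne_zero h₁ h₂ h₃ h₄ hQ₂
      (by rw [h₆, mordellDoubleX]; norm_num)
  have hx₄ : mordellDoubleX W.a₆ (mordellDoubleX W.a₆ 2) = (785 : ℕ) / (2 ^ 2 * 121 : ℕ) := by
    norm_num [h₆, mordellDoubleX]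
  have hv : padicValRat 2 (mordellDoubleX W.a₆ (mordellDoubleX W.a₆ 2)) < 0 := by
    rw [hx₄, padicValRat.div (by norm_num) (by norm_num), padicValRat.of_nat, padicValRat.of_nat,
      padicValNat.mul (by norm_num) (by norm_num), padicValNat.prime_pow,
      padicValNat.eq_zero_of_not_dvd (by norm_num), padicValNat.eq_zero_of_not_dvd (by norm_num)]
    norm_num
  refine Affine.not_isOfFinAddOrder_some_of_padicValRat_neg h₁ h₂ h₃ h₄ (b := -4)
    (by rw [h₆]; norm_num) hQ₄ hv ?_
  rw [← h4Q, ← h2Q]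
  exact (isOfFinAddOrder_iff_nsmul_eq_zero.mpr ⟨n, hn, by rwa [← natCast_zsmul]⟩).nsmul.nsmul

/-- The point `Q = (2, 2)` on the elliptic curve `E : y² = x³ − 4` over `ℚ` has infinite
order. -/
theorem point_on_xcubed_sub_four_infinite_order (W : WeierstrassCurve ℚ) [W.IsElliptic]
    (h₁ : W.a₁ = 0) (h₂ : W.a₂ = 0) (h₃ : W.a₃ = 0) (h₄ : W.a₄ = 0) (h₆ : W.a₆ = -4)
    (h : W.toAffine.Nonsingular 2 2) :
    ∀ n : ℕ, 0 < n → (n : ℤ) • (WeierstrassCurve.Affine.Point.some _ _ h) ≠ 0 :=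
  point_on_xcubed_sub_four_infinite_order_general W h₁ h₂ h₃ h₄ h₆ h
end
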